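/- arXiv:1905.08457 — 2 statements merged into one kernel-verified Lean document; each statement's English description precedes it below -/
import Mathlib

section
/- Let x, y ∈ ℝ^d and suppose that ‖x−y‖₂ ≤ r, ‖x‖₂ ≤ r, and ‖x+y‖₂ ≤ r, while ‖x−y‖₂ ≥ r−δ, ‖x‖₂ ≥ r−δ, ‖x+y‖₂ ≥ r−δ, where 0 ≤ δ ≤ r. Then ‖y‖₂ ≤ √(2δr). -/
/-! By the parallelogram law, `2‖x‖² + 2‖y‖² = ‖x + y‖² + ‖x - y‖² ≤ 2r²`, so
`‖y‖² ≤ r² - ‖x‖² ≤ r² - (r - δ)² = 2δr - δ²`. -/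

theorem norm_sq_le_sq_sub_sq_of_norm_add_le_of_norm_sub_le {E : Type*}
    [SeminormedAddCommGroup E] [InnerProductSpace ℝ E] {x y : E} {r ρ : ℝ} (hρ : 0 ≤ ρ)
    (hx : ρ ≤ ‖x‖) (hadd : ‖x + y‖ ≤ r) (hsub : ‖x - y‖ ≤ r) :
    ‖y‖ ^ 2 ≤ r ^ 2 - ρ ^ 2 := by
  have hadd2 : ‖x + y‖ ^ 2 ≤ r ^ 2 := pow_le_pow_left₀ (norm_nonneg _) hadd 2
  have hsub2 : ‖x - y‖ ^ 2 ≤ r ^ 2 := pow_le_pow_left₀ (norm_nonneg _) hsub 2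
  have hx2 : ρ ^ 2 ≤ ‖x‖ ^ 2 := pow_le_pow_left₀ hρ hx 2
  linarith [parallelogram_law_with_norm ℝ x y]

theorem stmt_6_general (d : ℕ) (x y : EuclideanSpace ℝ (Fin d)) (r δ : ℝ)
    (hδr : δ ≤ r)
    (h1 : ‖x - y‖ ≤ r) (h3 : ‖x + y‖ ≤ r)
    (h5 : r - δ ≤ ‖x‖) :
    ‖y‖ ≤ Real.sqrt (2 * δ * r) := by
  apply Real.le_sqrt_of_sq_le
  calc ‖y‖ ^ 2 ≤ r ^ 2 - (r - δ) ^ 2 :=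
        norm_sq_le_sq_sub_sq_of_norm_add_le_of_norm_sub_le (sub_nonneg.2 hδr) h5 h3 h1
    _ ≤ 2 * δ * r := by nlinarith [sq_nonneg δ]

theorem stmt_6 (d : ℕ) (x y : EuclideanSpace ℝ (Fin d)) (r δ : ℝ)
    (hr : 0 < r) (hδ0 : 0 ≤ δ) (hδr : δ ≤ r)
    (h1 : ‖x - y‖ ≤ r) (h2 : ‖x‖ ≤ r) (h3 : ‖x + y‖ ≤ r)
    (h4 : r - δ ≤ ‖x - y‖) (h5 : r - δ ≤ ‖x‖) (h6 : r - δ ≤ ‖x + y‖) :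
    ‖y‖ ≤ Real.sqrt (2 * δ * r) :=
  stmt_6_general d x y r δ hδr h1 h3 h5
end

section
/- Let S ⊆ ℕ be the set of positive integers all of whose base-6 digits lie in {0, 1, 2}. Then S contains no nontrivial four-term arithmetic progression. -/
/-- The set of positive integers all of whose base-6 digits lie in `{0, 1, 2}`. -/
def digitSet : Set ℕ := {m : ℕ | 0 < m ∧ ∀ c ∈ Nat.digits 6 m, c ≤ 2}

/-!
Look at the last base-6 digits. The residues `{0, 1, 2}` of `ℤ/6` contain no four-term progression
with nonzero difference, so `6 ∣ d`; then dropping the last digit of every term gives a progression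
with difference `d / 6` whose terms still have all digits in `{0, 1, 2}`, and we descend to `d = 0`.
-/

lemma Nat.mod_le_and_digits_div_le {b k m : ℕ} (hb : 1 < b) (h : ∀ c ∈ b.digits m, c ≤ k) :
    m % b ≤ k ∧ ∀ c ∈ b.digits (m / b), c ≤ k := by
  rcases Nat.eq_zero_or_pos m with rfl | hm
  · simp
  · rw [Nat.digits_def' hb hm] at h
    exact ⟨h _ List.mem_cons_self, fun c hc => h c (List.mem_cons_of_mem _ hc)⟩

lemma six_dvd_of_progression_mod_six_le_two {a d : ℕ} (h0 : a % 6 ≤ 2) (h1 : (a + d) % 6 ≤ 2)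
    (h2 : (a + 2 * d) % 6 ≤ 2) (h3 : (a + 3 * d) % 6 ≤ 2) : 6 ∣ d := by
  have : d % 6 < 6 := Nat.mod_lt _ (by norm_num)
  interval_cases hd : d % 6 <;> omega

lemma eq_zero_of_progression_digits_le_two {a d : ℕ} (h0 : ∀ c ∈ Nat.digits 6 a, c ≤ 2)
    (h1 : ∀ c ∈ Nat.digits 6 (a + d), c ≤ 2) (h2 : ∀ c ∈ Nat.digits 6 (a + 2 * d), c ≤ 2)
    (h3 : ∀ c ∈ Nat.digits 6 (a + 3 * d), c ≤ 2) : d = 0 := by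
  induction d using Nat.strong_induction_on generalizing a with
  | _ d ih =>
  obtain ⟨r0, q0⟩ := Nat.mod_le_and_digits_div_le (by norm_num) h0
  obtain ⟨r1, q1⟩ := Nat.mod_le_and_digits_div_le (by norm_num) h1
  obtain ⟨r2, q2⟩ := Nat.mod_le_and_digits_div_le (by norm_num) h2
  obtain ⟨r3, q3⟩ := Nat.mod_le_and_digits_div_le (by norm_num) h3
  obtain ⟨e, rfl⟩ := six_dvd_of_progression_mod_six_le_two r0 r1 r2 r3
  rw [show (a + 6 * e) / 6 = a / 6 + e by omega] at q1
  rw [show (a + 2 * (6 * e)) / 6 = a / 6 + 2 * e by omega] at q2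
  rw [show (a + 3 * (6 * e)) / 6 = a / 6 + 3 * e by omega] at q3
  rcases Nat.eq_zero_or_pos e with rfl | he
  · rfl
  · exact absurd (ih e (by omega) q0 q1 q2 q3) he.ne'

theorem stmt_14 :
    ¬ ∃ a d : ℕ, d ≠ 0 ∧ a ∈ digitSet ∧ a + d ∈ digitSet ∧ a + 2 * d ∈ digitSet ∧
      a + 3 * d ∈ digitSet := by
  rintro ⟨a, d, hd, ⟨-, h0⟩, ⟨-, h1⟩, ⟨-, h2⟩, ⟨-, h3⟩⟩
  exact hd (eq_zero_of_progression_digits_le_two h0 h1 h2 h3)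
end
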